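/- arXiv:1505.06161 — 2 statements merged into one kernel-verified Lean document; each statement's English description precedes it below -/
import Mathlib

section
/- Averaged version of the overlapping block decomposition: with the setup of the previous statement, suppose the overlap $J$ is chosen uniformly at random among $s$ disjoint possibilities $J_1,\dots,J_s$ (with corresponding splittings $\Gamma_\ell^{(\iota)},\Gamma_r^{(\iota)}$ whose intersection is $J_\iota$). Then $\frac{1}{s}\sum_{\iota=1}^{s}\Big(\sum_{\sigma_r}\mu(\sigma_r)\mathcal{E}_{\Gamma_\ell^{(\iota)}}^{\sigma_r}(f,f) + \sum_{\sigma_\ell}\mu(\sigma_\ell)\mathcal{E}_{\Gamma_r^{(\iota)}}^{\sigma_\ell}(f,f)\Big) \le \left(1+\frac{1}{s}\right)\mathcal{E}(f,f)$. -/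
open Finset

lemma cond_total {Ω R : Type*} [Fintype Ω] [Fintype R] [DecidableEq R]
    (μ : Ω → ℝ) (hμ : ∀ σ, 0 < μ σ) (π : Ω → R) (g : Ω → ℝ) :
    ∑ ρ : R, (∑ σ ∈ Finset.univ.filter (fun σ => π σ = ρ), μ σ) *
      (∑ σ ∈ Finset.univ.filter (fun σ => π σ = ρ),
        (μ σ / ∑ σ' ∈ Finset.univ.filter (fun σ' => π σ' = ρ), μ σ') * g σ)
      = ∑ σ, μ σ * g σ := by
  rw [← Finset.sum_fiberwise Finset.univ π (fun σ => μ σ * g σ)]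
  refine Finset.sum_congr rfl fun ρ _ => ?_
  set T := Finset.univ.filter (fun σ => π σ = ρ) with hT
  rcases T.eq_empty_or_nonempty with h | h
  · simp [h]
  · have hZ : 0 < ∑ σ' ∈ T, μ σ' := Finset.sum_pos (fun σ _ => hμ σ) h
    rw [Finset.mul_sum]
    refine Finset.sum_congr rfl fun σ _ => ?_
    field_simp

lemma block_eq {Ω R V : Type*} [Fintype Ω] [Fintype R] [DecidableEq R]
    (μ : Ω → ℝ) (hμ : ∀ σ, 0 < μ σ) (π : Ω → R) (S : Finset V) (G : V → Ω → ℝ) :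
    ∑ ρ : R, (∑ σ ∈ Finset.univ.filter (fun σ => π σ = ρ), μ σ) *
      ((1/2) * ∑ x ∈ S, ∑ σ ∈ Finset.univ.filter (fun σ => π σ = ρ),
        (μ σ / ∑ σ' ∈ Finset.univ.filter (fun σ' => π σ' = ρ), μ σ') * G x σ)
      = (1/2) * ∑ x ∈ S, ∑ σ, μ σ * G x σ := by
  have key : ∀ ρ : R,
      ((1/2 : ℝ) * ∑ x ∈ S, ∑ σ ∈ Finset.univ.filter (fun σ => π σ = ρ),
        (μ σ / ∑ σ' ∈ Finset.univ.filter (fun σ' => π σ' = ρ), μ σ') * G x σ)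
      = ∑ σ ∈ Finset.univ.filter (fun σ => π σ = ρ),
        (μ σ / ∑ σ' ∈ Finset.univ.filter (fun σ' => π σ' = ρ), μ σ') *
          ((1/2) * ∑ x ∈ S, G x σ) := by
    intro ρ
    rw [Finset.sum_comm, Finset.mul_sum]
    refine Finset.sum_congr rfl fun σ _ => ?_
    rw [Finset.mul_sum, Finset.mul_sum, Finset.mul_sum]
    exact Finset.sum_congr rfl fun x _ => by ring
  simp only [key]
  rw [cond_total μ hμ π (fun σ => (1/2) * ∑ x ∈ S, G x σ)]
  have h2 : ∑ σ, μ σ * ((1/2 : ℝ) * ∑ x ∈ S, G x σ)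
      = ∑ σ, (1/2 : ℝ) * ∑ x ∈ S, μ σ * G x σ := by
    refine Finset.sum_congr rfl fun σ _ => ?_
    rw [Finset.mul_sum, Finset.mul_sum, Finset.mul_sum]
    exact Finset.sum_congr rfl fun x _ => by ring
  rw [h2, ← Finset.mul_sum, Finset.sum_comm]


/-- Averaged overlapping block decomposition: with `s` choices of the overlap
`J 1, …, J s` pairwise disjoint, averaging the two-block conditional Dirichlet form
decomposition over a uniformly random choice of overlap gives the improved factor
`(1 + 1/s)` instead of `2`. -/
theorem averaged_overlapping_block_dirichlet {Ω V Rr Rl : Type*} [Fintype Ω] [Fintype V]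
    [DecidableEq V] [Fintype Rr] [Fintype Rl] [DecidableEq Rr] [DecidableEq Rl]
    (μ : Ω → ℝ) (hμ : ∀ σ, 0 < μ σ) (hμsum : ∑ σ, μ σ = 1)
    (r : V → Ω → ℝ) (hr : ∀ x σ, 0 ≤ r x σ)
    (m : V → Ω → Ω)
    (s : ℕ) (hs : 0 < s)
    (Γ : Finset V) (Γl Γr J : ℕ → Finset V)
    (hunion : ∀ ι ∈ Finset.range s, Γl ι ∪ Γr ι = Γ)
    (hJ : ∀ ι ∈ Finset.range s, Γl ι ∩ Γr ι = J ι)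
    (hdisj : ∀ ι ∈ Finset.range s, ∀ ι' ∈ Finset.range s, ι ≠ ι' →
      Disjoint (J ι) (J ι'))
    (πr : ℕ → Ω → Rr) (πl : ℕ → Ω → Rl)
    (f : Ω → ℝ) :
    (1 / (s : ℝ)) * ∑ ι ∈ Finset.range s,
      ((∑ ρ : Rr, (∑ σ ∈ Finset.univ.filter (fun σ => πr ι σ = ρ), μ σ) *
          ((1/2) * ∑ x ∈ Γl ι, ∑ σ ∈ Finset.univ.filter (fun σ => πr ι σ = ρ),
            (μ σ / ∑ σ' ∈ Finset.univ.filter (fun σ' => πr ι σ' = ρ), μ σ') *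
              r x σ * (f (m x σ) - f σ)^2)) +
       (∑ ρ : Rl, (∑ σ ∈ Finset.univ.filter (fun σ => πl ι σ = ρ), μ σ) *
          ((1/2) * ∑ x ∈ Γr ι, ∑ σ ∈ Finset.univ.filter (fun σ => πl ι σ = ρ),
            (μ σ / ∑ σ' ∈ Finset.univ.filter (fun σ' => πl ι σ' = ρ), μ σ') *
              r x σ * (f (m x σ) - f σ)^2))) ≤
    (1 + 1 / (s : ℝ)) * ((1/2) * ∑ x ∈ Γ, ∑ σ, μ σ * r x σ * (f (m x σ) - f σ)^2) := by
  have hs0 : (s : ℝ) ≠ 0 := Nat.cast_ne_zero.mpr hs.ne'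
  -- pointwise summand
  set h : V → ℝ := fun x => ∑ σ, μ σ * (r x σ * (f (m x σ) - f σ)^2) with hh
  have hhnn : ∀ x, 0 ≤ h x := fun x =>
    Finset.sum_nonneg fun σ _ => mul_nonneg (hμ σ).le (mul_nonneg (hr x σ) (sq_nonneg _))
  have hRHS : ∑ x ∈ Γ, ∑ σ, μ σ * r x σ * (f (m x σ) - f σ)^2 = ∑ x ∈ Γ, h x := by
    refine Finset.sum_congr rfl fun x _ => Finset.sum_congr rfl fun σ _ => by ring
  simp only [mul_assoc]
  have hterm : ∀ ι ∈ Finset.range s,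
      ((∑ ρ : Rr, (∑ σ ∈ Finset.univ.filter (fun σ => πr ι σ = ρ), μ σ) *
          ((1/2 : ℝ) * ∑ x ∈ Γl ι, ∑ σ ∈ Finset.univ.filter (fun σ => πr ι σ = ρ),
            (μ σ / ∑ σ' ∈ Finset.univ.filter (fun σ' => πr ι σ' = ρ), μ σ') *
              (r x σ * (f (m x σ) - f σ)^2))) +
       (∑ ρ : Rl, (∑ σ ∈ Finset.univ.filter (fun σ => πl ι σ = ρ), μ σ) *
          ((1/2) * ∑ x ∈ Γr ι, ∑ σ ∈ Finset.univ.filter (fun σ => πl ι σ = ρ),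
            (μ σ / ∑ σ' ∈ Finset.univ.filter (fun σ' => πl ι σ' = ρ), μ σ') *
              (r x σ * (f (m x σ) - f σ)^2))))
      = (1/2) * (∑ x ∈ Γ, h x) + (1/2) * ∑ x ∈ J ι, h x := by
    intro ι hι
    rw [block_eq μ hμ (πr ι) (Γl ι) (fun x σ => r x σ * (f (m x σ) - f σ)^2),
        block_eq μ hμ (πl ι) (Γr ι) (fun x σ => r x σ * (f (m x σ) - f σ)^2)]
    have := Finset.sum_union_inter (s₁ := Γl ι) (s₂ := Γr ι) (f := h)
    rw [hunion ι hι, hJ ι hι] at this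
    simp only [hh] at this
    linarith
  rw [Finset.sum_congr rfl hterm, Finset.sum_add_distrib, Finset.sum_const,
    Finset.card_range, ← Finset.mul_sum]
  have hJsub : ∀ ι ∈ Finset.range s, J ι ⊆ Γ := by
    intro ι hι x hx
    rw [← hJ ι hι] at hx
    exact (hunion ι hι) ▸ Finset.mem_union_left _ (Finset.mem_of_mem_inter_left hx)
  have hb : ∑ ι ∈ Finset.range s, ∑ x ∈ J ι, h x ≤ ∑ x ∈ Γ, h x := by
    rw [← Finset.sum_biUnion (fun a ha b hb hab =>
      hdisj a (Finset.mem_coe.mp ha) b (Finset.mem_coe.mp hb) hab)]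
    exact Finset.sum_le_sum_of_subset_of_nonneg (Finset.biUnion_subset.mpr hJsub)
      (fun x _ _ => hhnn x)
  show (1 / (s:ℝ)) * ((s : ℕ) • ((1/2) * ∑ x ∈ Γ, h x) +
      (1/2) * ∑ ι ∈ Finset.range s, ∑ x ∈ J ι, h x)
    ≤ (1 + 1 / (s:ℝ)) * ((1/2) * ∑ x ∈ Γ, h x)
  rw [nsmul_eq_mul]
  set H := ∑ x ∈ Γ, h x with hH
  set B := ∑ ι ∈ Finset.range s, ∑ x ∈ J ι, h x with hB
  have hs1 : (0:ℝ) < (s:ℝ) := by exact_mod_cast hs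
  have step : (1 / (s:ℝ)) * ((s:ℝ) * ((1/2) * H) + (1/2) * B)
      ≤ (1 / (s:ℝ)) * ((s:ℝ) * ((1/2) * H) + (1/2) * H) := by
    apply mul_le_mul_of_nonneg_left _ (by positivity)
    linarith
  refine step.trans_eq ?_
  field_simp
end

section
/- Entropy decomposition with weak dependence (Cesi-type): Let $\mu$ be a probability measure on a finite product space with coordinates indexed by $\Gamma=\Gamma_\ell\cup\Gamma_r$, $J=\Gamma_\ell\cap\Gamma_r$. Suppose there is $\epsilon\in[0,1/4]$ such that for all bounded $f_\ell$ measurable with respect to coordinates in $\Gamma_\ell\setminus J$ and all configurations $\sigma_r$ of the coordinates in $\Gamma_r\setminus J$: $|\mu(f_\ell\mid\sigma_r)-\mu(f_\ell)|\le\epsilon\,\mu(|f_\ell|)$, and symmetrically. Then there is a universal constant $K$ such that for all $f$: $\mathrm{Ent}_\mu(f^2) \le (1+K\epsilon)\,\mu\big[\mathrm{Ent}(f^2\mid\mathcal{F}_\ell) + \mathrm{Ent}(f^2\mid\mathcal{F}_r)\big]$, where $\mathcal{F}_\ell,\mathcal{F}_r$ are the sigma-algebras generated by the coordinates in $\Gamma_\ell\setminus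 J$ and $\Gamma_r\setminus J$ respectively. -/
/-!
Normalise `g = f²` to `μ g = 1` (entropy is homogeneous) and let `u = E[g | a]`, `v = E[g | c]`,
where `a ∈ A` and `c ∈ C` are the coordinates in `Γ_ℓ \ J` and `Γ_r \ J` (the block `B` is `J`).
The chain rule gives `μ[Ent(g | a)] = Ent g - Ent u`, and likewise for `c`. The pointwise Gibbs
inequality `g log (u v / g) ≤ u v - g` yields `Ent u + Ent v ≤ Ent g + Cov(u, v)`. Conditioning on
`c`, the decay hypothesis bounds `Cov(u, v) = μ[(u - 1)(v - 1)]` by `ε ‖u - 1‖₁ ‖v - 1‖₁`, and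
Pinsker's inequality `‖u - 1‖₁² ≤ 2 Ent u` bounds this by `ε (Ent u + Ent v)`. Hence
`(1 - ε)(Ent u + Ent v) ≤ Ent g`, which for `ε ≤ 1/4` rearranges to the claim with `K = 4`.
-/

open Finset

noncomputable section

/-- Marginal of `μ` on the first coordinate. -/
def margA {A B C : Type*} [Fintype B] [Fintype C] (μ : A × B × C → ℝ) (a : A) : ℝ :=
  ∑ b, ∑ c, μ (a, b, c)

/-- Marginal of `μ` on the last coordinate. -/
def margC {A B C : Type*} [Fintype A] [Fintype B] (μ : A × B × C → ℝ) (c : C) : ℝ :=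
  ∑ a, ∑ b, μ (a, b, c)

/-- Conditional expectation of `g` given the first coordinate equals `a`. -/
def condExpA {A B C : Type*} [Fintype B] [Fintype C] (μ g : A × B × C → ℝ) (a : A) : ℝ :=
  (∑ b, ∑ c, μ (a, b, c) * g (a, b, c)) / margA μ a

/-- Conditional expectation of `g` given the last coordinate equals `c`. -/
def condExpC {A B C : Type*} [Fintype A] [Fintype B] (μ g : A × B × C → ℝ) (c : C) : ℝ :=
  (∑ a, ∑ b, μ (a, b, c) * g (a, b, c)) / margC μ c

/-- Conditional entropy of `g` given the first coordinate. -/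
def entA {A B C : Type*} [Fintype B] [Fintype C] (μ g : A × B × C → ℝ) (a : A) : ℝ :=
  condExpA μ (fun σ => g σ * Real.log (g σ)) a -
    condExpA μ g a * Real.log (condExpA μ g a)

/-- Conditional entropy of `g` given the last coordinate. -/
def entC {A B C : Type*} [Fintype A] [Fintype B] (μ g : A × B × C → ℝ) (c : C) : ℝ :=
  condExpC μ (fun σ => g σ * Real.log (g σ)) c -
    condExpC μ g c * Real.log (condExpC μ g c)

open Real InformationTheory

lemma mul_log_le_mul_log_add_sub {x y : ℝ} (hx : 0 ≤ x) (hy : 0 < y) :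
    x * log y ≤ x * log x + y - x := by
  rcases hx.eq_or_lt with rfl | hx
  · simp [hy.le]
  · have h := mul_le_mul_of_nonneg_left (log_le_sub_one_of_pos (div_pos hy hx)) hx.le
    rw [log_div hy.ne' hx.ne', mul_sub_one, mul_div_cancel₀ _ hx.ne'] at h
    linarith

lemma monotoneOn_add_one_mul_log_sub :
    MonotoneOn (fun x : ℝ => (x + 1) * log x - 2 * (x - 1)) (Set.Ioi 0) := by
  refine monotoneOn_of_hasDerivWithinAt_nonneg (f' := fun x => log x - 1 + x⁻¹) (convex_Ioi 0)
    (by fun_prop (disch := grind)) (fun x hx => ?_) (fun x hx => ?_) <;> rw [interior_Ioi] at hx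
  · have h := (((hasDerivAt_id' x).add_const 1).mul (hasDerivAt_log hx.ne')).sub
      (((hasDerivAt_id' x).sub_const 1).const_mul 2)
    exact (h.congr_deriv (by rw [add_mul, mul_inv_cancel₀ hx.ne']; ring)).hasDerivWithinAt
  · linarith [one_sub_inv_le_log_of_pos hx]

lemma three_mul_sub_one_sq_le_mul_klFun {x : ℝ} (hx : 0 ≤ x) :
    3 * (x - 1) ^ 2 ≤ 2 * (x + 2) * klFun x := by
  let φ : ℝ → ℝ := fun y => (y + 1) * log y - 2 * (y - 1)
  let F : ℝ → ℝ := fun y => 2 * (y + 2) * klFun y - 3 * (y - 1) ^ 2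
  have hF : ∀ y, y ≠ 0 → HasDerivAt F (4 * φ y) y := by
    intro y hy
    have h := ((((hasDerivAt_id' y).add_const 2).const_mul 2).mul (hasDerivAt_klFun hy)).sub
      ((((hasDerivAt_id' y).sub_const 1).pow 2).const_mul 3)
    exact h.congr_deriv (by simp only [φ, klFun]; ring)
  have hFc : Continuous F := by fun_prop
  -- `φ` is monotone with `φ 1 = 0`, so `F' = 4 φ` changes sign at `1`, where `F` vanishes.
  have hφ1 : φ 1 = 0 := by simp [φ]
  suffices F 1 ≤ F x by simpa [F, klFun_one] using this
  rcases le_total x 1 with hx1 | hx1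
  · refine antitoneOn_of_hasDerivWithinAt_nonpos (convex_Icc 0 1) hFc.continuousOn
      (fun y hy => (hF y ?_).hasDerivWithinAt) (fun y hy => ?_) ⟨hx, hx1⟩
      ⟨zero_le_one, le_rfl⟩ hx1 <;> rw [interior_Icc] at hy
    · exact hy.1.ne'
    · have : φ y ≤ φ 1 := monotoneOn_add_one_mul_log_sub hy.1 (Set.mem_Ioi.2 one_pos) hy.2.le
      linarith
  · refine monotoneOn_of_hasDerivWithinAt_nonneg (convex_Ici 1) hFc.continuousOn
      (fun y hy => (hF y ?_).hasDerivWithinAt) (fun y hy => ?_) Set.self_mem_Ici hx1 hx1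
      <;> rw [interior_Ici] at hy
    · exact (zero_lt_one.trans hy).ne'
    · have : φ 1 ≤ φ y :=
        monotoneOn_add_one_mul_log_sub (Set.mem_Ioi.2 one_pos)
          (Set.mem_Ioi.2 (zero_lt_one.trans hy)) hy.le
      linarith

lemma le_one_add_four_mul_sub_add_sub {x y z p q ε : ℝ} (hε0 : 0 ≤ ε) (hε1 : ε ≤ 1 / 4)
    (h : y + z ≤ x + ε * p * q) (hp : p ^ 2 ≤ 2 * y) (hq : q ^ 2 ≤ 2 * z) :
    x ≤ (1 + 4 * ε) * ((x - y) + (x - z)) := by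
  have hpq : p * q ≤ y + z := by nlinarith [sq_nonneg (p - q)]
  have hyz : 0 ≤ y + z := by nlinarith [sq_nonneg p, sq_nonneg q]
  have hx : (1 - ε) * (y + z) ≤ x := by nlinarith [mul_le_mul_of_nonneg_left hpq hε0]
  nlinarith [mul_nonneg (mul_nonneg hε0 hyz) (by linarith : (0 : ℝ) ≤ 3 - 8 * ε),
    mul_nonneg (by linarith : (0 : ℝ) ≤ 1 + 8 * ε) (by linarith : 0 ≤ x - (1 - ε) * (y + z))]

section Entropy

variable {Ω : Type*} [Fintype Ω]

def ent (μ g : Ω → ℝ) : ℝ :=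
  ∑ σ, μ σ * (g σ * log (g σ)) - (∑ σ, μ σ * g σ) * log (∑ σ, μ σ * g σ)

lemma ent_const_mul (μ g : Ω → ℝ) (c : ℝ) : ent μ (fun σ => c * g σ) = c * ent μ g := by
  have h (x : ℝ) : c * x * log (c * x) = c * (x * log x) + c * log c * x := by
    have := negMulLog_mul c x
    simp only [negMulLog] at this
    linarith
  have hsum : ∑ σ, μ σ * (c * g σ) = c * ∑ σ, μ σ * g σ := by
    rw [mul_sum]
    exact sum_congr rfl fun σ _ => mul_left_comm _ _ _
  have hlog : ∑ σ, μ σ * (c * g σ * log (c * g σ)) =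
      c * ∑ σ, μ σ * (g σ * log (g σ)) + c * log c * ∑ σ, μ σ * g σ := by
    simp only [h, mul_add, sum_add_distrib, mul_sum]
    congr 1 <;> exact sum_congr rfl fun _ _ => by ring
  simp only [ent]
  rw [hsum, hlog, h]
  ring

lemma sq_sum_mul_abs_sub_one_le_two_mul_ent {μ g : Ω → ℝ} (hμ : ∀ σ, 0 ≤ μ σ)
    (hμ1 : ∑ σ, μ σ = 1) (hg : ∀ σ, 0 ≤ g σ) (hg1 : ∑ σ, μ σ * g σ = 1) :
    (∑ σ, μ σ * |g σ - 1|) ^ 2 ≤ 2 * ent μ g := by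
  have hent : ent μ g = ∑ σ, μ σ * klFun (g σ) := by
    simp only [ent, hg1, log_one, mul_zero, sub_zero, klFun, mul_add, mul_sub, mul_one,
      sum_add_distrib, sum_sub_distrib, hμ1]
    ring
  have hmass : ∑ σ, μ σ * (2 / 3 * (g σ + 2)) = 2 := by
    simp only [mul_add, mul_left_comm _ (2 / 3 : ℝ), sum_add_distrib, ← mul_sum, ← sum_mul,
      hg1, hμ1]
    norm_num
  calc (∑ σ, μ σ * |g σ - 1|) ^ 2
      ≤ (∑ σ, μ σ * klFun (g σ)) * ∑ σ, μ σ * (2 / 3 * (g σ + 2)) := by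
        refine sum_sq_le_sum_mul_sum_of_sq_le_mul _
          (fun σ _ => mul_nonneg (hμ σ) (klFun_nonneg (hg σ)))
          (fun σ _ => mul_nonneg (hμ σ) (by linarith [hg σ])) fun σ _ => ?_
        have := mul_le_mul_of_nonneg_left (three_mul_sub_one_sq_le_mul_klFun (hg σ))
          (sq_nonneg (μ σ))
        rw [mul_pow, sq_abs]
        linarith
    _ = 2 * ent μ g := by rw [hent, hmass, mul_comm]

lemma exists_eq_const_mul_of_nonneg {μ g : Ω → ℝ} (hμ : ∀ σ, 0 < μ σ) (hμ1 : ∑ σ, μ σ = 1)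
    (hg : ∀ σ, 0 ≤ g σ) :
    ∃ c, 0 ≤ c ∧ ∃ g' : Ω → ℝ, (∀ σ, 0 ≤ g' σ) ∧ ∑ σ, μ σ * g' σ = 1 ∧
      g = fun σ => c * g' σ := by
  set M := ∑ σ, μ σ * g σ
  rcases (sum_nonneg fun σ _ => mul_nonneg (hμ σ).le (hg σ) : 0 ≤ M).eq_or_lt with hM | hM
  · refine ⟨0, le_rfl, fun _ => 1, fun _ => zero_le_one, by simpa using hμ1, funext fun σ => ?_⟩
    have := (sum_eq_zero_iff_of_nonneg fun τ _ => mul_nonneg (hμ τ).le (hg τ)).1 hM.symm σ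
      (mem_univ σ)
    simpa [(hμ σ).ne'] using this
  · refine ⟨M, hM.le, fun σ => g σ / M, fun σ => div_nonneg (hg σ) hM.le, ?_,
      funext fun σ => (mul_div_cancel₀ _ hM.ne').symm⟩
    simp only [mul_div_assoc', ← sum_div]
    exact div_self hM.ne'

end Entropy

section Conditional

variable {Ω α : Type*} [Fintype Ω] [DecidableEq α] (X : Ω → α)

def marg (μ : Ω → ℝ) (a : α) : ℝ :=
  ∑ σ with X σ = a, μ σ

def condExp (μ g : Ω → ℝ) (a : α) : ℝ :=
  marg X (fun σ => μ σ * g σ) a / marg X μ a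

def condEnt (μ g : Ω → ℝ) (a : α) : ℝ :=
  condExp X μ (fun σ => g σ * log (g σ)) a - condExp X μ g a * log (condExp X μ g a)

variable {μ : Ω → ℝ}

lemma marg_nonneg (hμ : ∀ σ, 0 ≤ μ σ) (a : α) : 0 ≤ marg X μ a :=
  sum_nonneg fun σ _ => hμ σ

lemma condExp_nonneg (hμ : ∀ σ, 0 ≤ μ σ) {g : Ω → ℝ} (hg : ∀ σ, 0 ≤ g σ) (a : α) :
    0 ≤ condExp X μ g a :=
  div_nonneg (marg_nonneg X (fun σ => mul_nonneg (hμ σ) (hg σ)) a) (marg_nonneg X hμ a)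

lemma condExp_pos (hμ : ∀ σ, 0 ≤ μ σ) {g : Ω → ℝ} (hg : ∀ σ, 0 ≤ g σ) {σ : Ω}
    (hμσ : 0 < μ σ) (hgσ : 0 < g σ) : 0 < condExp X μ g (X σ) := by
  have hσ : σ ∈ univ.filter (X · = X σ) := by simp
  exact div_pos (sum_pos' (fun τ _ => mul_nonneg (hμ τ) (hg τ)) ⟨σ, hσ, mul_pos hμσ hgσ⟩)
    (sum_pos' (fun τ _ => hμ τ) ⟨σ, hσ, hμσ⟩)

lemma condExp_const_mul (g : Ω → ℝ) (c : ℝ) :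
    condExp X μ (fun σ => c * g σ) = fun a => c * condExp X μ g a := by
  funext a
  simp only [condExp, marg, mul_left_comm _ c, ← mul_sum, mul_div_assoc]

lemma marg_mul_condExp (hμ : ∀ σ, 0 ≤ μ σ) (g : Ω → ℝ) (a : α) :
    marg X μ a * condExp X μ g a = marg X (fun σ => μ σ * g σ) a := by
  rcases eq_or_ne (marg X μ a) 0 with h | h
  · have hfiber := (sum_eq_zero_iff_of_nonneg fun σ _ => hμ σ).1 h
    rw [h, zero_mul, marg, sum_eq_zero fun σ hσ => by rw [hfiber σ hσ, zero_mul]]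
  · exact mul_div_cancel₀ _ h

variable [Fintype α]

lemma sum_mul_comp (μ : Ω → ℝ) (h : α → ℝ) :
    ∑ σ, μ σ * h (X σ) = ∑ a, marg X μ a * h a := by
  rw [← sum_fiberwise univ X]
  refine sum_congr rfl fun a _ => ?_
  rw [marg, sum_mul]
  exact sum_congr rfl fun σ hσ => by rw [(mem_filter.1 hσ).2]

lemma sum_marg (μ : Ω → ℝ) : ∑ a, marg X μ a = ∑ σ, μ σ := by
  simpa using (sum_mul_comp X μ fun _ => (1 : ℝ)).symm

lemma sum_mul_mul_comp (hμ : ∀ σ, 0 ≤ μ σ) (g : Ω → ℝ) (h : α → ℝ) :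
    ∑ σ, μ σ * (g σ * h (X σ)) = ∑ a, marg X μ a * (condExp X μ g a * h a) := by
  simp only [← mul_assoc, marg_mul_condExp X hμ]
  exact sum_mul_comp X _ h

lemma sum_marg_mul_condExp (hμ : ∀ σ, 0 ≤ μ σ) (g : Ω → ℝ) :
    ∑ a, marg X μ a * condExp X μ g a = ∑ σ, μ σ * g σ := by
  simpa using (sum_mul_mul_comp X hμ g fun _ => (1 : ℝ)).symm

lemma sum_mul_condExp_comp (hμ : ∀ σ, 0 ≤ μ σ) (g : Ω → ℝ) :
    ∑ σ, μ σ * condExp X μ g (X σ) = ∑ σ, μ σ * g σ := by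
  rw [sum_mul_comp X, sum_marg_mul_condExp X hμ]

lemma ent_eq_ent_condExp_add (hμ : ∀ σ, 0 ≤ μ σ) (g : Ω → ℝ) :
    ent μ g = ent (marg X μ) (condExp X μ g) + ∑ a, marg X μ a * condEnt X μ g a := by
  simp only [ent, condEnt, mul_sub, sum_sub_distrib, sum_marg_mul_condExp X hμ]
  ring

lemma ent_marg_condExp_of_sum_eq_one (hμ : ∀ σ, 0 ≤ μ σ) {g : Ω → ℝ}
    (hg1 : ∑ σ, μ σ * g σ = 1) :
    ent (marg X μ) (condExp X μ g) = ∑ σ, μ σ * (g σ * log (condExp X μ g (X σ))) := by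
  rw [sum_mul_mul_comp X hμ g fun a => log (condExp X μ g a), ent, sum_marg_mul_condExp X hμ,
    hg1, log_one, mul_zero, sub_zero]

lemma sq_sum_mul_abs_condExp_sub_one_le (hμ : ∀ σ, 0 ≤ μ σ) (hμ1 : ∑ σ, μ σ = 1)
    {g : Ω → ℝ} (hg : ∀ σ, 0 ≤ g σ) (hg1 : ∑ σ, μ σ * g σ = 1) :
    (∑ σ, μ σ * |condExp X μ g (X σ) - 1|) ^ 2 ≤ 2 * ent (marg X μ) (condExp X μ g) := by
  rw [sum_mul_comp X μ fun a => |condExp X μ g a - 1|]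
  exact sq_sum_mul_abs_sub_one_le_two_mul_ent (marg_nonneg X hμ) ((sum_marg X μ).trans hμ1)
    (condExp_nonneg X hμ hg) ((sum_marg_mul_condExp X hμ g).trans hg1)

lemma sum_mul_mul_comp_le (hμ : ∀ σ, 0 ≤ μ σ) {φ : Ω → ℝ} {δ : ℝ}
    (hφ : ∀ a, |condExp X μ φ a| ≤ δ) (k : α → ℝ) :
    ∑ σ, μ σ * (φ σ * k (X σ)) ≤ δ * ∑ σ, μ σ * |k (X σ)| := by
  rw [sum_mul_mul_comp X hμ, sum_mul_comp X μ fun a => |k a|, mul_sum]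
  refine sum_le_sum fun a _ => ?_
  calc marg X μ a * (condExp X μ φ a * k a)
      ≤ marg X μ a * (δ * |k a|) := by
        refine mul_le_mul_of_nonneg_left ?_ (marg_nonneg X hμ a)
        exact ((le_abs_self _).trans_eq (abs_mul _ _)).trans
          (mul_le_mul_of_nonneg_right (hφ a) (abs_nonneg _))
    _ = δ * (marg X μ a * |k a|) := mul_left_comm _ _ _

end Conditional

section TwoObservables

variable {Ω β γ : Type*} [Fintype Ω] [Fintype β] [Fintype γ] [DecidableEq β] [DecidableEq γ]
  (X : Ω → β) (Y : Ω → γ) {μ : Ω → ℝ}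

lemma ent_condExp_add_ent_condExp_le (hμ : ∀ σ, 0 ≤ μ σ) {g : Ω → ℝ} (hg : ∀ σ, 0 ≤ g σ)
    (hg1 : ∑ σ, μ σ * g σ = 1) :
    ent (marg X μ) (condExp X μ g) + ent (marg Y μ) (condExp Y μ g) ≤
      ent μ g + (∑ σ, μ σ * (condExp X μ g (X σ) * condExp Y μ g (Y σ)) - 1) := by
  have hpoint : ∀ σ, μ σ * (g σ * log (condExp X μ g (X σ))) +
      μ σ * (g σ * log (condExp Y μ g (Y σ))) ≤ μ σ * (g σ * log (g σ)) +
        (μ σ * (condExp X μ g (X σ) * condExp Y μ g (Y σ)) - μ σ * g σ) := by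
    intro σ
    rcases (hμ σ).eq_or_lt with hμσ | hμσ
    · simp [← hμσ]
    rcases (hg σ).eq_or_lt with hgσ | hgσ
    · simp only [← hgσ, zero_mul, mul_zero, zero_add, sub_zero]
      exact mul_nonneg (hμ σ) (mul_nonneg (condExp_nonneg X hμ hg _) (condExp_nonneg Y hμ hg _))
    have hu := condExp_pos X hμ hg hμσ hgσ
    have hv := condExp_pos Y hμ hg hμσ hgσ
    have h := mul_log_le_mul_log_add_sub (hg σ) (mul_pos hu hv)
    rw [log_mul hu.ne' hv.ne'] at h
    nlinarith [mul_le_mul_of_nonneg_left h hμσ.le]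
  have hsum := sum_le_sum fun σ (_ : σ ∈ univ) => hpoint σ
  simp only [sum_add_distrib, sum_sub_distrib] at hsum
  rw [ent_marg_condExp_of_sum_eq_one X hμ hg1, ent_marg_condExp_of_sum_eq_one Y hμ hg1, ent, hg1,
    log_one, mul_zero, sub_zero]
  linarith

lemma ent_le_of_sum_mul_eq_one (hμ : ∀ σ, 0 ≤ μ σ) (hμ1 : ∑ σ, μ σ = 1) {ε : ℝ}
    (hε0 : 0 ≤ ε) (hε1 : ε ≤ 1 / 4)
    (hdecay : ∀ (h : β → ℝ) (c : γ),
      |condExp Y μ (fun σ => h (X σ)) c - ∑ σ, μ σ * h (X σ)| ≤ ε * ∑ σ, μ σ * |h (X σ)|)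
    {g : Ω → ℝ} (hg : ∀ σ, 0 ≤ g σ) (hg1 : ∑ σ, μ σ * g σ = 1) :
    ent μ g ≤ (1 + 4 * ε) * ((ent μ g - ent (marg X μ) (condExp X μ g)) +
      (ent μ g - ent (marg Y μ) (condExp Y μ g))) := by
  set u := condExp X μ g
  set v := condExp Y μ g
  have hu1 : ∑ σ, μ σ * u (X σ) = 1 := (sum_mul_condExp_comp X hμ g).trans hg1
  have hv1 : ∑ σ, μ σ * v (Y σ) = 1 := (sum_mul_condExp_comp Y hμ g).trans hg1
  have hcentered : ∀ c, |condExp Y μ (fun σ => u (X σ) - 1) c| ≤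
      ε * ∑ σ, μ σ * |u (X σ) - 1| := by
    intro c
    have hmean : ∑ σ, μ σ * (u (X σ) - 1) = 0 := by
      simp only [mul_sub_one, sum_sub_distrib, hu1, hμ1, sub_self]
    simpa only [hmean, sub_zero] using hdecay (fun a => u a - 1) c
  have hcov : ∑ σ, μ σ * (u (X σ) * v (Y σ)) - 1 ≤
      ε * (∑ σ, μ σ * |u (X σ) - 1|) * ∑ σ, μ σ * |v (Y σ) - 1| := by
    have h σ : μ σ * ((u (X σ) - 1) * (v (Y σ) - 1)) =
        μ σ * (u (X σ) * v (Y σ)) - μ σ * u (X σ) - μ σ * v (Y σ) + μ σ := by ring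
    calc ∑ σ, μ σ * (u (X σ) * v (Y σ)) - 1
        = ∑ σ, μ σ * ((u (X σ) - 1) * (v (Y σ) - 1)) := by
          simp only [h, sum_add_distrib, sum_sub_distrib, hu1, hv1, hμ1]
          ring
      _ ≤ _ := sum_mul_mul_comp_le Y hμ hcentered fun c => v c - 1
  have hgibbs : ent (marg X μ) u + ent (marg Y μ) v ≤
      ent μ g + (∑ σ, μ σ * (u (X σ) * v (Y σ)) - 1) :=
    ent_condExp_add_ent_condExp_le X Y hμ hg hg1
  exact le_one_add_four_mul_sub_add_sub hε0 hε1 (hgibbs.trans (by linarith))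
    (sq_sum_mul_abs_condExp_sub_one_le X hμ hμ1 hg hg1)
    (sq_sum_mul_abs_condExp_sub_one_le Y hμ hμ1 hg hg1)

theorem ent_le_one_add_four_mul (hμ : ∀ σ, 0 < μ σ) (hμ1 : ∑ σ, μ σ = 1) {ε : ℝ}
    (hε0 : 0 ≤ ε) (hε1 : ε ≤ 1 / 4)
    (hdecay : ∀ (h : β → ℝ) (c : γ),
      |condExp Y μ (fun σ => h (X σ)) c - ∑ σ, μ σ * h (X σ)| ≤ ε * ∑ σ, μ σ * |h (X σ)|)
    {g : Ω → ℝ} (hg : ∀ σ, 0 ≤ g σ) :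
    ent μ g ≤ (1 + 4 * ε) * ((∑ a, marg X μ a * condEnt X μ g a) +
      ∑ c, marg Y μ c * condEnt Y μ g c) := by
  have hμ0 σ : 0 ≤ μ σ := (hμ σ).le
  obtain ⟨c, hc, g, hg', hg1, rfl⟩ := exists_eq_const_mul_of_nonneg hμ hμ1 hg
  have key := ent_le_of_sum_mul_eq_one X Y hμ0 hμ1 hε0 hε1 hdecay hg' hg1
  have hX := ent_eq_ent_condExp_add X hμ0 fun σ => c * g σ
  have hY := ent_eq_ent_condExp_add Y hμ0 fun σ => c * g σ
  simp only [condExp_const_mul, ent_const_mul] at hX hY ⊢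
  nlinarith [mul_le_mul_of_nonneg_left key hc]

end TwoObservables

section ThreeBlocks

variable {A B C : Type*} [Fintype A] [Fintype B] [Fintype C]

lemma margA_eq_marg [DecidableEq A] (μ : A × B × C → ℝ) : margA μ = marg Prod.fst μ := by
  funext a
  rw [marg, sum_filter, Fintype.sum_prod_type_right]
  simp [margA, Fintype.sum_prod_type]

lemma margC_eq_marg [DecidableEq C] (μ : A × B × C → ℝ) :
    margC μ = marg (fun σ => σ.2.2) μ := by
  funext c
  simp [margC, marg, sum_filter, Fintype.sum_prod_type]

lemma condExpA_eq_condExp [DecidableEq A] (μ g : A × B × C → ℝ) :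
    condExpA μ g = condExp Prod.fst μ g := by
  funext a
  change margA (fun σ => μ σ * g σ) a / margA μ a = _
  rw [margA_eq_marg, margA_eq_marg, condExp]

lemma condExpC_eq_condExp [DecidableEq C] (μ g : A × B × C → ℝ) :
    condExpC μ g = condExp (fun σ => σ.2.2) μ g := by
  funext c
  change margC (fun σ => μ σ * g σ) c / margC μ c = _
  rw [margC_eq_marg, margC_eq_marg, condExp]

lemma entA_eq_condEnt [DecidableEq A] (μ g : A × B × C → ℝ) :
    entA μ g = condEnt Prod.fst μ g := by
  funext a
  simp only [entA, condEnt, condExpA_eq_condExp]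

lemma entC_eq_condEnt [DecidableEq C] (μ g : A × B × C → ℝ) :
    entC μ g = condEnt (fun σ => σ.2.2) μ g := by
  funext c
  simp only [entC, condEnt, condExpC_eq_condExp]

end ThreeBlocks

/-- Cesi-type entropy decomposition under weak dependence between the two outer blocks
of a three-block product space (left block `A`, overlap `B`, right block `C`): there is
a universal constant `K` such that ε-decay of correlations between the outer blocks
implies `Ent(f²) ≤ (1 + Kε) (μ[Ent(f²|F_ℓ)] + μ[Ent(f²|F_r)])`. -/
theorem cesi_entropy_decomposition :
    ∃ K : ℝ, 0 < K ∧
    ∀ (A B C : Type) (_ : Fintype A) (_ : Fintype B) (_ : Fintype C),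
    ∀ μ : A × B × C → ℝ, (∀ σ, 0 < μ σ) → (∑ σ, μ σ = 1) →
    ∀ ε : ℝ, 0 ≤ ε → ε ≤ 1/4 →
    (∀ (fl : A → ℝ) (c : C),
      |condExpC μ (fun σ => fl σ.1) c - ∑ σ, μ σ * fl σ.1| ≤ ε * ∑ σ, μ σ * |fl σ.1|) →
    (∀ (fr : C → ℝ) (a : A),
      |condExpA μ (fun σ => fr σ.2.2) a - ∑ σ, μ σ * fr σ.2.2| ≤
        ε * ∑ σ, μ σ * |fr σ.2.2|) →
    ∀ f : A × B × C → ℝ,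
      (∑ σ, μ σ * ((f σ)^2 * Real.log ((f σ)^2))) -
          (∑ σ, μ σ * (f σ)^2) * Real.log (∑ σ, μ σ * (f σ)^2) ≤
        (1 + K * ε) * ((∑ a, margA μ a * entA μ (fun σ => (f σ)^2) a) +
          (∑ c, margC μ c * entC μ (fun σ => (f σ)^2) c)) := by
  refine ⟨4, by norm_num, fun A B C _ _ _ μ hμ hμ1 ε hε0 hε1 hdecay _ f => ?_⟩
  classical
  simp only [condExpC_eq_condExp] at hdecay
  simp only [margA_eq_marg, margC_eq_marg, entA_eq_condEnt, entC_eq_condEnt]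
  exact ent_le_one_add_four_mul Prod.fst (fun σ : A × B × C => σ.2.2) hμ hμ1 hε0 hε1 hdecay
    fun σ => sq_nonneg (f σ)

end
end
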